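/- If A ⊆ ℝ is a Borel set with packing dimension 0, then the product set AA = {a·b : a, b ∈ A} has Hausdorff dimension 0. -/

import Mathlib

/-!
If `E` and `F` lie in a ball of radius `R` and are covered by `2 ^ (a N)` and `2 ^ (b N)` balls of
radius `2⁻¹ ^ N`, then the products of the centres give `2 ^ ((a + b) N)` balls of radius
`(2 R + 1) 2⁻¹ ^ N` covering `E F`; feeding these covers into the Hausdorff measure gives
`dimH (E F) ≤ a + b`. Packing dimension `0` writes `A` as a countable union of sets of
arbitrarily small upper box dimension; cutting these into bounded pieces and using countable
stability of the Hausdorff dimension gives `dimH (A A) = 0`.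
-/

open Filter MeasureTheory Set Pointwise
open scoped ENNReal

/-- Minimal number of closed balls of radius `r` needed to cover `A`. -/
noncomputable def covN (A : Set ℝ) (r : ℝ) : ℕ∞ :=
  ⨅ (t : Finset ℝ) (_ : A ⊆ ⋃ x ∈ t, Metric.closedBall x r), (t.card : ℕ∞)

/-- Upper box dimension, computed along scales `2⁻¹ ^ N`. -/
noncomputable def ubox (A : Set ℝ) : ℝ≥0∞ :=
  Filter.limsup (fun N : ℕ =>
    if covN A ((2 : ℝ)⁻¹ ^ N) = ⊤ then (⊤ : ℝ≥0∞)
    else ENNReal.ofReal (Real.logb 2 ((covN A ((2 : ℝ)⁻¹ ^ N)).toNat) / N)) Filter.atTop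

/-- Packing dimension via countable covers and upper box dimension. -/
noncomputable def packDim (A : Set ℝ) : ℝ≥0∞ :=
  ⨅ (f : ℕ → Set ℝ) (_ : A ⊆ ⋃ n, f n), ⨆ n, ubox (f n)

open Metric
open scoped NNReal Topology

lemma covN_mono {A B : Set ℝ} (h : A ⊆ B) (r : ℝ) : covN A r ≤ covN B r :=
  le_iInf₂ fun t ht => iInf₂_le t (h.trans ht)

lemma exists_cover_card_le_covN {A : Set ℝ} {r : ℝ} (h : covN A r ≠ ⊤) :
    ∃ t : Finset ℝ, (A ⊆ ⋃ x ∈ t, closedBall x r) ∧ t.card ≤ (covN A r).toNat := by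
  obtain ⟨n, hn⟩ := ENat.ne_top_iff_exists.mp h
  rw [← hn, ENat.toNat_natCast]
  by_contra! hc
  have : ((n + 1 : ℕ) : ℕ∞) ≤ covN A r := le_iInf₂ fun t ht => by exact_mod_cast hc t ht
  rw [← hn, Nat.cast_le] at this
  omega

lemma logb_two_natCast_mono : Monotone fun n : ℕ => Real.logb 2 n := by
  intro m n hmn
  rcases m.eq_zero_or_pos with rfl | hm
  · rcases n.eq_zero_or_pos with rfl | hn
    · exact le_rfl
    · simpa using Real.logb_nonneg one_lt_two (by exact_mod_cast hn : (1 : ℝ) ≤ n)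
  · exact Real.logb_le_logb_of_le one_lt_two (by exact_mod_cast hm) (by exact_mod_cast hmn)

lemma ubox_mono {A B : Set ℝ} (h : A ⊆ B) : ubox A ≤ ubox B := by
  refine limsup_le_limsup (Eventually.of_forall fun N => ?_)
  have hAB := covN_mono h ((2 : ℝ)⁻¹ ^ N)
  dsimp only
  split_ifs with hA hB hB
  · exact le_rfl
  · exact absurd (top_le_iff.mp (hA ▸ hAB)) hB
  · exact le_top
  · exact ENNReal.ofReal_le_ofReal <| div_le_div_of_nonneg_right
      (logb_two_natCast_mono (ENat.toNat_le_toNat hAB hB)) N.cast_nonneg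

lemma eventually_exists_cover_card_le_of_ubox_lt {E : Set ℝ} {a : ℝ≥0} (h : ubox E < a) :
    ∀ᶠ N : ℕ in atTop, ∃ t : Finset ℝ,
      (E ⊆ ⋃ x ∈ t, closedBall x ((2 : ℝ)⁻¹ ^ N)) ∧
        (t.card : ℝ) ≤ 2 ^ (a * N : ℝ) := by
  filter_upwards [eventually_lt_of_limsup_lt h, eventually_gt_atTop 0] with N hN hN0
  have hne : covN E ((2 : ℝ)⁻¹ ^ N) ≠ ⊤ := fun htop => by
    rw [if_pos htop] at hN
    exact not_top_lt hN
  rw [if_neg hne, ← ENNReal.ofReal_coe_nnreal, ENNReal.ofReal_lt_ofReal_iff'] at hN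
  obtain ⟨t, ht, hcard⟩ := exists_cover_card_le_covN hne
  refine ⟨t, ht, ?_⟩
  set m := (covN E ((2 : ℝ)⁻¹ ^ N)).toNat
  have hlog : Real.logb 2 m < a * N := by
    rw [← div_lt_iff₀ (by exact_mod_cast hN0)]
    exact hN.1
  calc (t.card : ℝ) ≤ m := by exact_mod_cast hcard
    _ ≤ 2 ^ (a * N : ℝ) := by
      rcases m.eq_zero_or_pos with h0 | h0
      · rw [h0, Nat.cast_zero]; positivity
      · exact ((Real.logb_lt_iff_lt_rpow one_lt_two (by exact_mod_cast h0)).mp hlog).le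

lemma two_rpow_mul_mul_rpow_eq {s d c : ℝ} (hc : 0 ≤ c) (N : ℕ) :
    (2 : ℝ) ^ (s * N) * (c * 2⁻¹ ^ N) ^ d = c ^ d * (2 ^ (s - d)) ^ N := by
  have h2 : (2 : ℝ)⁻¹ ^ N = 2 ^ (-(N : ℝ)) := by
    rw [Real.rpow_neg zero_le_two, Real.rpow_natCast, inv_pow]
  rw [h2, Real.mul_rpow hc (by positivity), ← Real.rpow_mul zero_le_two,
    ← Real.rpow_natCast (2 ^ (s - d)), ← Real.rpow_mul zero_le_two]
  have : (2 : ℝ) ^ (s * N) * 2 ^ (-(N : ℝ) * d) = 2 ^ ((s - d) * N) := by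
    rw [← Real.rpow_add two_pos]; ring_nf
  linear_combination c ^ d * this

section HausdorffMeasure

variable {X : Type*} [MetricSpace X] [MeasurableSpace X] [BorelSpace X]

theorem hausdorffMeasure_le_liminf_card_mul {S : Set X} {d : ℝ} (hd : 0 ≤ d) {ρ : ℕ → ℝ}
    (hρ : Tendsto ρ atTop (𝓝 0)) {t : ℕ → Finset X}
    (ht : ∀ᶠ N in atTop, S ⊆ ⋃ x ∈ t N, closedBall x (ρ N)) :
    μH[d] S ≤ liminf (fun N => (t N).card * ENNReal.ofReal (2 * ρ N) ^ d) atTop := by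
  have hdiam (N : ℕ) (x : X) : ediam (closedBall x (ρ N)) ≤ ENNReal.ofReal (2 * ρ N) :=
    ediam_le_of_forall_dist_le fun y hy z hz => by
      linarith [dist_triangle_right y z x, mem_closedBall.mp hy, mem_closedBall.mp hz]
  calc μH[d] S
      ≤ liminf (fun N => ∑ x : t N, ediam (closedBall (x : X) (ρ N)) ^ d) atTop :=
        Measure.hausdorffMeasure_le_liminf_sum d S (fun N => ENNReal.ofReal (2 * ρ N))
          (by simpa using ENNReal.tendsto_ofReal (hρ.const_mul 2))
          (fun N (x : t N) => closedBall (x : X) (ρ N))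
          (Eventually.of_forall fun N x => hdiam N x)
          (ht.mono fun N hN y hy =>
            let ⟨x, hx, hyx⟩ := mem_iUnion₂.mp (hN hy); mem_iUnion.mpr ⟨⟨x, hx⟩, hyx⟩)
    _ ≤ liminf (fun N => (t N).card * ENNReal.ofReal (2 * ρ N) ^ d) atTop := by
        refine liminf_le_liminf (Eventually.of_forall fun N => ?_)
        simpa using Finset.sum_le_card_nsmul Finset.univ _ _
          fun (x : t N) _ => ENNReal.rpow_le_rpow (hdiam N x) hd

theorem hausdorffMeasure_eq_zero_of_dyadic_covers {S : Set X} {c s d : ℝ} (hc : 0 ≤ c)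
    (hd : 0 ≤ d) (hsd : s < d)
    (hcov : ∀ᶠ N : ℕ in atTop, ∃ t : Finset X,
      (S ⊆ ⋃ x ∈ t, closedBall x (c * 2⁻¹ ^ N)) ∧ (t.card : ℝ) ≤ 2 ^ (s * N)) :
    μH[d] S = 0 := by
  obtain ⟨t, ht⟩ := hcov.choice
  have hρ : Tendsto (fun N : ℕ => c * 2⁻¹ ^ N) atTop (𝓝 0) := by
    simpa using (tendsto_pow_atTop_nhds_zero_of_lt_one (r := (2 : ℝ)⁻¹) (by norm_num)
      (by norm_num)).const_mul c
  have hbound : ∀ᶠ N : ℕ in atTop,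
      ((t N).card : ℝ≥0∞) * ENNReal.ofReal (2 * (c * 2⁻¹ ^ N)) ^ d ≤
        ENNReal.ofReal ((2 * c) ^ d * (2 ^ (s - d)) ^ N) := by
    filter_upwards [ht] with N hN
    rw [← two_rpow_mul_mul_rpow_eq (by positivity), mul_assoc, ← ENNReal.ofReal_natCast,
      ENNReal.ofReal_rpow_of_nonneg (by positivity) hd, ← ENNReal.ofReal_mul (by positivity)]
    gcongr
    exact hN.2
  have hlim : Tendsto (fun N : ℕ => (2 * c) ^ d * (2 ^ (s - d)) ^ N) atTop (𝓝 0) := by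
    simpa using (tendsto_pow_atTop_nhds_zero_of_lt_one (by positivity)
      (Real.rpow_lt_one_of_one_lt_of_neg one_lt_two (sub_neg.mpr hsd))).const_mul ((2 * c) ^ d)
  refine le_antisymm ?_ zero_le
  calc μH[d] S ≤ _ := hausdorffMeasure_le_liminf_card_mul hd hρ (ht.mono fun N hN => hN.1)
    _ ≤ _ := liminf_le_liminf hbound
    _ = 0 := by simpa using (ENNReal.tendsto_ofReal hlim).liminf_eq

end HausdorffMeasure

lemma mul_subset_iUnion_closedBall {E F : Set ℝ} {R r : ℝ} {t u : Finset ℝ}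
    (hE : E ⊆ closedBall 0 R) (hF : F ⊆ closedBall 0 R)
    (ht : E ⊆ ⋃ x ∈ t, closedBall x r) (hu : F ⊆ ⋃ y ∈ u, closedBall y r) :
    E * F ⊆ ⋃ z ∈ t * u, closedBall z (r * (2 * R + r)) := by
  rintro _ ⟨e, he, f, hf, rfl⟩
  obtain ⟨x, hx, hex⟩ := mem_iUnion₂.mp (ht he)
  obtain ⟨y, hy, hfy⟩ := mem_iUnion₂.mp (hu hf)
  refine mem_iUnion₂.mpr ⟨x * y, Finset.mul_mem_mul hx hy, ?_⟩
  rw [mem_closedBall, Real.dist_eq] at hex hfy ⊢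
  have heR : |e| ≤ R := by simpa using hE he
  have hfR : |f| ≤ R := by simpa using hF hf
  have hxR : |x| ≤ R + r := by linarith [abs_sub_abs_le_abs_sub x e, abs_sub_comm e x]
  calc |e * f - x * y| = |(e - x) * f + x * (f - y)| := by ring_nf
    _ ≤ |e - x| * |f| + |x| * |f - y| := by rw [← abs_mul, ← abs_mul]; exact abs_add_le _ _
    _ ≤ r * R + (R + r) * r := by gcongr <;> linarith [abs_nonneg (e - x), abs_nonneg x]
    _ = r * (2 * R + r) := by ring

lemma hausdorffMeasure_mul_eq_zero_of_ubox_lt {E F : Set ℝ} (hE : Bornology.IsBounded E)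
    (hF : Bornology.IsBounded F) {a b : ℝ≥0} (hEa : ubox E < a) (hFb : ubox F < b) {d : ℝ}
    (hd : a + b < d) : μH[d] (E * F) = 0 := by
  obtain ⟨R, hR, hEF⟩ := (hE.union hF).subset_closedBall_lt 0 0
  refine hausdorffMeasure_eq_zero_of_dyadic_covers (c := 2 * R + 1) (s := a + b) (by positivity)
    ((add_nonneg a.2 b.2).trans hd.le) hd ?_
  filter_upwards [eventually_exists_cover_card_le_of_ubox_lt hEa,
    eventually_exists_cover_card_le_of_ubox_lt hFb] with N ⟨t, ht, htc⟩ ⟨u, hu, huc⟩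
  have hr1 : (2 : ℝ)⁻¹ ^ N ≤ 1 := pow_le_one₀ (by norm_num) (by norm_num)
  refine ⟨t * u, (mul_subset_iUnion_closedBall (subset_union_left.trans hEF)
    (subset_union_right.trans hEF) ht hu).trans
    (iUnion₂_mono fun z _ => closedBall_subset_closedBall ?_), ?_⟩
  · nlinarith [pow_nonneg (by norm_num : (0 : ℝ) ≤ 2⁻¹) N]
  · calc ((t * u).card : ℝ) ≤ t.card * u.card := by exact_mod_cast Finset.card_mul_le
      _ ≤ 2 ^ (a * N : ℝ) * 2 ^ (b * N : ℝ) := by gcongr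
      _ = 2 ^ ((a + b : ℝ) * N) := by rw [← Real.rpow_add two_pos, add_mul]

lemma dimH_mul_le_of_ubox_lt {E F : Set ℝ} (hE : Bornology.IsBounded E)
    (hF : Bornology.IsBounded F) {a b : ℝ≥0} (hEa : ubox E < a) (hFb : ubox F < b) :
    dimH (E * F) ≤ a + b := by
  refine dimH_le fun d hd => le_of_not_gt fun hlt => ?_
  rw [← ENNReal.coe_add, ENNReal.coe_lt_coe, ← NNReal.coe_lt_coe] at hlt
  simp [hausdorffMeasure_mul_eq_zero_of_ubox_lt hE hF hEa hFb hlt] at hd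

lemma exists_cover_ubox_lt_of_packDim_lt {A : Set ℝ} {c : ℝ≥0∞} (h : packDim A < c) :
    ∃ f : ℕ → Set ℝ, A ⊆ ⋃ n, f n ∧ ∀ n, ubox (f n) < c := by
  simp only [packDim, iInf_lt_iff] at h
  obtain ⟨f, hf, hc⟩ := h
  exact ⟨f, hf, fun n => (le_iSup (fun n => ubox (f n)) n).trans_lt hc⟩

theorem stmt2_general (A : Set ℝ) (hpack : packDim A = 0) :
    dimH (A * A) = 0 := by
  refine le_antisymm (ENNReal.le_of_forall_pos_le_add fun ε hε _ => ?_) zero_le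
  obtain ⟨f, hAf, hf⟩ := exists_cover_ubox_lt_of_packDim_lt
    (hpack ▸ ENNReal.coe_pos.mpr (half_pos hε) : packDim A < (ε / 2 : ℝ≥0))
  set g : ℕ × ℕ → Set ℝ := fun p => f p.1 ∩ closedBall 0 p.2
  have hAg : A ⊆ ⋃ p, g p := fun x hx => by
    obtain ⟨n, hn⟩ := mem_iUnion.mp (hAf hx)
    have hx0 : x ∈ ⋃ k : ℕ, closedBall (0 : ℝ) k := by rw [iUnion_closedBall_nat]; trivial
    obtain ⟨k, hk⟩ := mem_iUnion.mp hx0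
    exact mem_iUnion.mpr ⟨(n, k), hn, hk⟩
  have hg (p : ℕ × ℕ) : ubox (g p) < (ε / 2 : ℝ≥0) :=
    (ubox_mono inter_subset_left).trans_lt (hf p.1)
  have hgb (p : ℕ × ℕ) : Bornology.IsBounded (g p) :=
    isBounded_closedBall.subset inter_subset_right
  calc dimH (A * A) ≤ dimH (⋃ p, ⋃ q, g p * g q) :=
        dimH_mono ((mul_subset_mul hAg hAg).trans_eq (by rw [iUnion_mul]; simp only [mul_iUnion]))
    _ = ⨆ p, ⨆ q, dimH (g p * g q) := by simp only [dimH_iUnion]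
    _ ≤ ((ε / 2 : ℝ≥0) : ℝ≥0∞) + (ε / 2 : ℝ≥0) :=
        iSup₂_le fun p q => dimH_mul_le_of_ubox_lt (hgb p) (hgb q) (hg p) (hg q)
    _ = 0 + ε := by rw [← ENNReal.coe_add, add_halves, zero_add]

theorem stmt2 (A : Set ℝ) (hA : MeasurableSet A) (hpack : packDim A = 0) :
    dimH (A * A) = 0 :=
  stmt2_general A hpack
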